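/- For every k-dipolyhedron D = (B, C) ∈ D_k, the cone pD ∈ D_{k+1} satisfies E_flat(pD) ≤ (1 + c) · E_flat(D). (In the paper, for dipolyhedra supported in the cube Q(p, r) the cone operator satisfies this with c = r√3/(k+1), giving E_flat(pD) ≤ (1 + r√3/(k+1)) E_flat(D).) -/
import Mathlib


/-- Algebraic model of mod-2 polyhedral chains: a family of additive commutative
groups `P j` (indexed by degree) in which every element is 2-torsion, a mass
function `M` that vanishes at `0`, is nonnegative and subadditive, and boundary
maps `bd j : P (j+1) → P j` which are additive and satisfy `bd ∘ bd = 0`. -/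
structure ChainModel where
  P : ℕ → Type
  [grp : ∀ j, AddCommGroup (P j)]
  two_torsion : ∀ (j : ℕ) (x : P j), x + x = 0
  M : ∀ j, P j → ℝ
  M_zero : ∀ j, M j 0 = 0
  M_nonneg : ∀ (j : ℕ) (x : P j), 0 ≤ M j x
  M_subadd : ∀ (j : ℕ) (x y : P j), M j (x + y) ≤ M j x + M j y
  bd : ∀ j, P (j + 1) → P j
  bd_add : ∀ (j : ℕ) (x y : P (j + 1)), bd j (x + y) = bd j x + bd j y
  bd_bd : ∀ (j : ℕ) (x : P (j + 2)), bd j (bd (j + 1) x) = 0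

attribute [instance] ChainModel.grp

/-- The flat norm `M_flat(B) = inf { M(Q) + M(R) : B = Q + ∂R }`. -/
noncomputable def ChainModel.Mflat (Γ : ChainModel) (j : ℕ) (B : Γ.P j) : ℝ :=
  sInf { m : ℝ | ∃ (Q : Γ.P j) (R : Γ.P (j + 1)),
    B = Q + Γ.bd j R ∧ m = Γ.M j Q + Γ.M (j + 1) R }

/-- A dipolyhedron of dimension `j+1` is a pair `(B, C) ∈ P (j+1) × P j`
(representing `δB + μC`); its energy is `E(D) = M(B) + M(C)`. -/
noncomputable def ChainModel.E (Γ : ChainModel) (j : ℕ) (D : Γ.P (j + 1) × Γ.P j) : ℝ :=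
  Γ.M (j + 1) D.1 + Γ.M j D.2

/-- Boundary of a dipolyhedron: `∂(B, C) = (∂B + C, ∂C)`. -/
def ChainModel.dbd (Γ : ChainModel) (j : ℕ) (D : Γ.P (j + 2) × Γ.P (j + 1)) :
    Γ.P (j + 1) × Γ.P j :=
  (Γ.bd (j + 1) D.1 + D.2, Γ.bd j D.2)

/-- The flat energy `E_flat(D) = inf { E(Q) + E(R) : D = Q + ∂R }`. -/
noncomputable def ChainModel.Eflat (Γ : ChainModel) (j : ℕ) (D : Γ.P (j + 1) × Γ.P j) : ℝ :=
  sInf { m : ℝ | ∃ (Q : Γ.P (j + 1) × Γ.P j) (R : Γ.P (j + 2) × Γ.P (j + 1)),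
    D = Q + Γ.dbd j R ∧ m = Γ.E j Q + Γ.E (j + 1) R }

/-- for every k-dipolyhedron `D = (B, C)`, the cone
`pD = (pB, pC)` satisfies `E_flat(pD) ≤ (1 + c) · E_flat(D)`, where the cone
operator `p` satisfies `x = ∂(px) + p(∂x)` and `M(px) ≤ c · M(x)`. -/
theorem eflat_cone (Γ : ChainModel) (c : ℝ) (hc : 0 ≤ c)
    (p : ∀ j, Γ.P j → Γ.P (j + 1))
    (p_add : ∀ (j : ℕ) (x y : Γ.P j), p j (x + y) = p j x + p j y)
    (p_cone : ∀ (j : ℕ) (x : Γ.P (j + 1)),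
      x = Γ.bd (j + 1) (p (j + 1) x) + p j (Γ.bd j x))
    (p_mass : ∀ (j : ℕ) (x : Γ.P j), Γ.M (j + 1) (p j x) ≤ c * Γ.M j x)
    (k : ℕ) (B : Γ.P (k + 1)) (C : Γ.P k) :
    Γ.Eflat (k + 1) (p (k + 1) B, p k C) ≤ (1 + c) * Γ.Eflat k (B, C) := by
  have negeq : ∀ (j : ℕ) (x : Γ.P j), -x = x := fun j x =>
    neg_eq_of_add_eq_zero_left (Γ.two_torsion j x)
  have bd_zero : ∀ (j : ℕ), Γ.bd j 0 = 0 := by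
    intro j
    have h := Γ.bd_add j 0 0
    rw [add_zero] at h
    exact (left_eq_add.mp h)
  -- cancellation: from cone identity, p (bd x) = x + bd (p x)
  have key : ∀ (j : ℕ) (x : Γ.P (j + 1)),
      p j (Γ.bd j x) = x + Γ.bd (j + 1) (p (j + 1) x) := by
    intro j x
    have h1 : p j (Γ.bd j x) + Γ.bd (j + 1) (p (j + 1) x) = x := by
      exact (add_comm _ _).trans (p_cone j x).symm
    calc p j (Γ.bd j x)
        = (p j (Γ.bd j x) + Γ.bd (j + 1) (p (j + 1) x)) + Γ.bd (j + 1) (p (j + 1) x) := by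
          rw [add_assoc, Γ.two_torsion, add_zero]
      _ = x + Γ.bd (j + 1) (p (j + 1) x) := by rw [h1]
  set S := { m : ℝ | ∃ (Q : Γ.P (k + 1) × Γ.P k) (R : Γ.P (k + 2) × Γ.P (k + 1)),
    (B, C) = Q + Γ.dbd k R ∧ m = Γ.E k Q + Γ.E (k + 1) R } with hS
  set S' := { m : ℝ | ∃ (Q : Γ.P (k + 2) × Γ.P (k + 1)) (R : Γ.P (k + 3) × Γ.P (k + 2)),
    (p (k + 1) B, p k C) = Q + Γ.dbd (k + 1) R ∧ m = Γ.E (k + 1) Q + Γ.E (k + 2) R } with hS'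
  have hSne : S.Nonempty := by
    refine ⟨Γ.E k (B, C) + Γ.E (k + 1) (0 : Γ.P (k + 2) × Γ.P (k + 1)), (B, C), 0, ?_, rfl⟩
    simp [ChainModel.dbd, bd_zero]
  have hS'bdd : BddBelow S' := by
    refine ⟨0, ?_⟩
    rintro m ⟨Q, R, -, rfl⟩
    have := Γ.M_nonneg (k + 2) Q.1
    have := Γ.M_nonneg (k + 1) Q.2
    have := Γ.M_nonneg (k + 3) R.1
    have := Γ.M_nonneg (k + 2) R.2
    simp only [ChainModel.E]
    linarith
  have hpos : (0 : ℝ) < 1 + c := by linarith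
  -- main estimate: for every m ∈ S, sInf S' ≤ (1+c) * m
  have hmain : ∀ m ∈ S, sInf S' ≤ (1 + c) * m := by
    rintro m ⟨Q, R, hD, rfl⟩
    have hB := congrArg Prod.fst hD
    have hC := congrArg Prod.snd hD
    simp only [ChainModel.dbd, Prod.fst_add, Prod.snd_add] at hB hC
    -- hB : B = Q.1 + (bd (k+1) R.1 + R.2), hC : C = Q.2 + bd k R.2
    set Q' : Γ.P (k + 2) × Γ.P (k + 1) := (p (k + 1) Q.1 + R.1, p k Q.2 + R.2)
    set R' : Γ.P (k + 3) × Γ.P (k + 2) := (p (k + 2) R.1, p (k + 1) R.2)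
    have hdec : (p (k + 1) B, p k C) = Q' + Γ.dbd (k + 1) R' := by
      have h1 : p (k + 1) B = Q'.1 + (Γ.bd (k + 2) R'.1 + R'.2) := by
        rw [hB, p_add, p_add, key (k + 1) R.1]
        show _ = (p (k + 1) Q.1 + R.1) + (Γ.bd (k + 2) (p (k + 2) R.1) + p (k + 1) R.2)
        abel
      have h2 : p k C = Q'.2 + Γ.bd (k + 1) R'.2 := by
        rw [hC, p_add, key k R.2]
        show _ = (p k Q.2 + R.2) + Γ.bd (k + 1) (p (k + 1) R.2)
        abel
      exact Prod.ext h1 h2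
    have hmem : Γ.E (k + 1) Q' + Γ.E (k + 2) R' ∈ S' := ⟨Q', R', hdec, rfl⟩
    have hle := csInf_le hS'bdd hmem
    refine hle.trans ?_
    have e1 : Γ.M (k + 2) Q'.1 ≤ c * Γ.M (k + 1) Q.1 + Γ.M (k + 2) R.1 :=
      (Γ.M_subadd (k + 2) _ _).trans (by linarith [p_mass (k + 1) Q.1])
    have e2 : Γ.M (k + 1) Q'.2 ≤ c * Γ.M k Q.2 + Γ.M (k + 1) R.2 :=
      (Γ.M_subadd (k + 1) _ _).trans (by linarith [p_mass k Q.2])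
    have e3 : Γ.M (k + 3) R'.1 ≤ c * Γ.M (k + 2) R.1 := p_mass (k + 2) R.1
    have e4 : Γ.M (k + 2) R'.2 ≤ c * Γ.M (k + 1) R.2 := p_mass (k + 1) R.2
    have n1 := Γ.M_nonneg (k + 1) Q.1
    have n2 := Γ.M_nonneg k Q.2
    simp only [ChainModel.E]
    nlinarith
  -- conclude
  have hlb : sInf S' / (1 + c) ≤ sInf S := by
    apply le_csInf hSne
    intro m hm
    rw [div_le_iff₀ hpos]
    have := hmain m hm
    linarith [this, mul_comm m (1 + c)]
  calc Γ.Eflat (k + 1) (p (k + 1) B, p k C) = sInf S' := rfl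
    _ ≤ (1 + c) * sInf S := by
        rw [div_le_iff₀ hpos] at hlb
        linarith [hlb, mul_comm (sInf S) (1 + c)]
    _ = (1 + c) * Γ.Eflat k (B, C) := rfl
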